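/- Assume λ + μ² ≠ 0, let P, Q, R, S be a pqrs-quad satisfying the B-relations, and suppose the first-integral constant 𝔇 = P(0)·S(0) − Q(0)·R(0) is nonzero. Then the operator L_B acts injectively on the space of solutions of the special double confluent Heun equation: if F is entire, ℋ[F] = 0, and L_B[F](w) = 0 for all w ∈ ℂ, then F(w) = 0 for all w ∈ ℂ. -/

import Mathlib

noncomputable def ipi : ℂ := (Real.pi : ℂ) * Complex.I

noncomputable def heunOp (ell lam mu : ℂ) (F : ℂ → ℂ) : ℂ → ℂ := fun w =>
  deriv (deriv F) w + (ell + mu * (Complex.exp (-w) - Complex.exp w)) * deriv F w +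
    (lam - (ell + 1) * mu * Complex.exp w) * F w

noncomputable def opLB (ell mu : ℂ) (R S : ℂ → ℂ) (F : ℂ → ℂ) : ℂ → ℂ := fun w =>
  Complex.exp ((1 - ell) * w) * Complex.exp (mu * (Complex.exp w + Complex.exp (-w))) *
    (S (w + ipi) * F (w + ipi) - Complex.exp w * R (w + ipi) * deriv F (w + ipi))

/-!
The determinant `𝔇 = P S - Q R` satisfies `𝔇' = 2(ℓ-1)𝔇`, so `𝔇(w) = 𝔇(0) e^{2(ℓ-1)w}` never
vanishes. Write `firstOrderOp A B F = B F + e^w A F'`. Since `e^{w+iπ} = -e^w`, the equation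
`L_B[F] = 0` says exactly that `firstOrderOp R S F` vanishes. Differentiating it and using the last
two equations of the system and `ℋ[F] = 0` gives
`e^w (firstOrderOp R S F)' = ((ℓ-1)e^w - μ) firstOrderOp R S F - (λ+μ²) firstOrderOp P Q F`,
so `firstOrderOp P Q F` vanishes too. Eliminating `F'` between the two relations leaves `𝔇 F = 0`.
-/

open Complex

noncomputable def firstOrderOp (A B F : ℂ → ℂ) (w : ℂ) : ℂ :=
  B w * F w + exp w * A w * deriv F w

theorem eq_mul_exp_of_hasDerivAt_const_mul {f : ℂ → ℂ} {c : ℂ}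
    (hf : ∀ v, HasDerivAt f (c * f v) v) (v : ℂ) : f v = f 0 * exp (c * v) := by
  have hderiv : ∀ u, HasDerivAt (fun u => f u * exp (-(c * u))) 0 u := by
    intro u
    have hexp : HasDerivAt (fun u => exp (-(c * u))) (exp (-(c * u)) * -c) u :=
      (((hasDerivAt_id u).const_mul c).neg.congr_deriv (by simp)).cexp
    exact ((hf u).mul hexp).congr_deriv (by ring)
  have hconst := is_const_of_deriv_eq_zero (fun u => (hderiv u).differentiableAt)
    (fun u => (hderiv u).deriv) v 0
  simp only [mul_zero, neg_zero, exp_zero, mul_one] at hconst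
  rw [← hconst, mul_assoc, ← exp_add, neg_add_cancel, exp_zero, mul_one]

theorem opLB_eq_mul_firstOrderOp (ell mu : ℂ) (R S F : ℂ → ℂ) (w : ℂ) :
    opLB ell mu R S F w =
      exp ((1 - ell) * w) * exp (mu * (exp w + exp (-w))) *
        firstOrderOp R S F (w + ipi) := by
  rw [opLB, firstOrderOp, ipi, exp_add_pi_mul_I]
  ring

theorem firstOrderOp_eq_zero_of_opLB_eq_zero {ell mu : ℂ} {R S F : ℂ → ℂ}
    (hLB : ∀ w, opLB ell mu R S F w = 0) (w : ℂ) : firstOrderOp R S F w = 0 := by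
  have h := hLB (w - ipi)
  rwa [opLB_eq_mul_firstOrderOp, sub_add_cancel, mul_eq_zero,
    or_iff_right (mul_ne_zero (exp_ne_zero _) (exp_ne_zero _))] at h

theorem mul_firstOrderOp_sub_mul_firstOrderOp (P Q R S F : ℂ → ℂ) (w : ℂ) :
    P w * firstOrderOp R S F w - R w * firstOrderOp P Q F w = (P w * S w - Q w * R w) * F w := by
  rw [firstOrderOp, firstOrderOp]
  ring

section PqrsSystem

variable {ell lam mu : ℂ} {P Q R S : ℂ → ℂ}

theorem hasDerivAt_pqrs_det (hP : Differentiable ℂ P) (hQ : Differentiable ℂ Q)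
    (hR : Differentiable ℂ R) (hS : Differentiable ℂ S)
    (hsys1 : ∀ w : ℂ, exp w * deriv P w =
      (mu + (ell - 1) * exp w) * P w - Q w + exp (2 * w) * R w)
    (hsys2 : ∀ w : ℂ, deriv Q w =
      exp w * ((lam - (ell + 1) * mu * exp w) * P w + mu * Q w + S w))
    (hsys3 : ∀ w : ℂ, exp w * deriv R w =
      -(lam + mu ^ 2) * P w + exp w * (2 * (ell - 1) - mu * exp w) * R w - S w)
    (hsys4 : ∀ w : ℂ, exp w * deriv S w =
      -(lam + mu ^ 2) * Q w + exp (2 * w) * (lam - (ell + 1) * mu * exp w) * R w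
        + ((ell - 1) * exp w - mu) * S w) (v : ℂ) :
    HasDerivAt (fun w => P w * S w - Q w * R w) (2 * (ell - 1) * (P v * S v - Q v * R v)) v := by
  refine (((hP v).hasDerivAt.mul (hS v).hasDerivAt).sub
    ((hQ v).hasDerivAt.mul (hR v).hasDerivAt)).congr_deriv ?_
  have h1 := hsys1 v
  have h4 := hsys4 v
  rw [two_mul, exp_add] at h1 h4
  refine mul_left_cancel₀ (exp_ne_zero v) ?_
  linear_combination S v * h1 + P v * h4 - exp v * R v * hsys2 v - Q v * hsys3 v

theorem exp_mul_deriv_firstOrderOp {F : ℂ → ℂ} (hR : Differentiable ℂ R)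
    (hS : Differentiable ℂ S) (hF : Differentiable ℂ F)
    (hsys3 : ∀ w : ℂ, exp w * deriv R w =
      -(lam + mu ^ 2) * P w + exp w * (2 * (ell - 1) - mu * exp w) * R w - S w)
    (hsys4 : ∀ w : ℂ, exp w * deriv S w =
      -(lam + mu ^ 2) * Q w + exp (2 * w) * (lam - (ell + 1) * mu * exp w) * R w
        + ((ell - 1) * exp w - mu) * S w) (v : ℂ) :
    exp v * deriv (firstOrderOp R S F) v =
      ((ell - 1) * exp v - mu) * firstOrderOp R S F v - (lam + mu ^ 2) * firstOrderOp P Q F v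
        + exp v ^ 2 * R v * heunOp ell lam mu F v := by
  have hderiv : HasDerivAt (firstOrderOp R S F)
      (deriv S v * F v + S v * deriv F v +
        ((exp v * R v + exp v * deriv R v) * deriv F v + exp v * R v * deriv (deriv F) v)) v :=
    ((hS v).hasDerivAt.mul (hF v).hasDerivAt).add
      (((hasDerivAt_exp v).mul (hR v).hasDerivAt).mul (hF.deriv v).hasDerivAt)
  have h4 := hsys4 v
  rw [two_mul, exp_add] at h4
  have hinv : exp (-v) * exp v = 1 := by rw [← exp_add, neg_add_cancel, exp_zero]
  rw [hderiv.deriv, firstOrderOp, firstOrderOp, heunOp]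
  linear_combination F v * h4 + exp v * deriv F v * hsys3 v - mu * exp v * R v * deriv F v * hinv

end PqrsSystem

theorem statement_13 (ell lam mu : ℂ) (hne : lam + mu ^ 2 ≠ 0) (P Q R S : ℂ → ℂ)
    (hP : Differentiable ℂ P) (hQ : Differentiable ℂ Q)
    (hR : Differentiable ℂ R) (hS : Differentiable ℂ S)
    (hsys1 : ∀ w : ℂ, Complex.exp w * deriv P w =
      (mu + (ell - 1) * Complex.exp w) * P w - Q w + Complex.exp (2 * w) * R w)
    (hsys2 : ∀ w : ℂ, deriv Q w =
      Complex.exp w * ((lam - (ell + 1) * mu * Complex.exp w) * P w + mu * Q w + S w))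
    (hsys3 : ∀ w : ℂ, Complex.exp w * deriv R w =
      -(lam + mu ^ 2) * P w + Complex.exp w * (2 * (ell - 1) - mu * Complex.exp w) * R w - S w)
    (hsys4 : ∀ w : ℂ, Complex.exp w * deriv S w =
      -(lam + mu ^ 2) * Q w + Complex.exp (2 * w) * (lam - (ell + 1) * mu * Complex.exp w) * R w
        + ((ell - 1) * Complex.exp w - mu) * S w)
    (hD : P 0 * S 0 - Q 0 * R 0 ≠ 0)
    (F : ℂ → ℂ) (hF : Differentiable ℂ F)
    (hHeun : ∀ w : ℂ, heunOp ell lam mu F w = 0)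
    (hLB : ∀ w : ℂ, opLB ell mu R S F w = 0) :
    ∀ w : ℂ, F w = 0 := by
  intro w
  have hRS : firstOrderOp R S F = 0 := funext (firstOrderOp_eq_zero_of_opLB_eq_zero hLB)
  have hPQ : firstOrderOp P Q F w = 0 := by
    have h := exp_mul_deriv_firstOrderOp (P := P) (Q := Q) hR hS hF hsys3 hsys4 w
    simp only [hRS, hHeun, Pi.zero_apply, deriv_zero, mul_zero, zero_sub, add_zero] at h
    exact (mul_eq_zero.1 (neg_eq_zero.1 h.symm)).resolve_left hne
  have hdet : P w * S w - Q w * R w ≠ 0 := by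
    rw [eq_mul_exp_of_hasDerivAt_const_mul
      (hasDerivAt_pqrs_det hP hQ hR hS hsys1 hsys2 hsys3 hsys4)]
    exact mul_ne_zero hD (exp_ne_zero _)
  have hcross := mul_firstOrderOp_sub_mul_firstOrderOp P Q R S F w
  rw [hRS, hPQ, Pi.zero_apply, mul_zero, mul_zero, sub_zero, eq_comm, mul_eq_zero] at hcross
  exact hcross.resolve_left hdet
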